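/- arXiv:2209.05101 — 3 statements merged into one kernel-verified Lean document; each statement's English description precedes it below -/
import Mathlib

section
/- Let φ : ℝ^ℓ → [0,∞) be continuously differentiable and let H = ∏ᵢ [aᵢ, bᵢ] be an ℓ-dimensional hyperrectangle with aᵢ < bᵢ, corners z₁,…,z_{2^ℓ}, and side lengths δzᵢ = bᵢ − aᵢ. Suppose Lᵢ ≥ |(∇φ(z))ᵢ| for all z ∈ H and all i = 1,…,ℓ. If ∑ⱼ Lⱼ·δzⱼ < 2γ* + 2τ − (2/2^ℓ)·∑ᵢ φ(zᵢ), where γ* ≥ maxᵢ φ(zᵢ) and τ > 0, then φ(z) < γ* + τ for all z ∈ H. -/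
/-!
By the mean value theorem, `φ z ≤ φ(z_c) + ∑ᵢ Lᵢ |zᵢ - (z_c)ᵢ|` for every corner `z_c`.
Averaging over the `2^ℓ` corners, the distances `|zᵢ - (z_c)ᵢ|` in coordinate `i` are
`zᵢ - aᵢ` for half of them and `bᵢ - zᵢ` for the other half, so they average to `δzᵢ / 2`
whatever `z` is. Hence `φ z` is at most the mean corner value plus `½ ∑ᵢ Lᵢ δzᵢ`, which the
hypothesis bounds by `γ* + τ`.
-/

open Finset

theorem Fintype.two_mul_sum_comp_eval {ι M : Type*} [Fintype ι] [DecidableEq ι] [CommSemiring M]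
    (i : ι) (f : Bool → M) :
    2 * ∑ c : ι → Bool, f (c i) = 2 ^ Fintype.card ι * (f false + f true) := by
  have hflip : Function.Involutive fun c : ι → Bool => Function.update c i (!c i) := by
    intro c; simp
  have hsum : ∑ c : ι → Bool, f (c i) = ∑ c : ι → Bool, f (!c i) := by
    simpa using (Equiv.sum_comp hflip.toPerm fun c => f (c i)).symm
  have hpair : ∀ c : ι → Bool, f (c i) + f (!c i) = f false + f true := by
    intro c; cases c i <;> simp [add_comm]
  calc 2 * ∑ c : ι → Bool, f (c i)
      = ∑ c : ι → Bool, (f (c i) + f (!c i)) := by rw [two_mul, sum_add_distrib, ← hsum]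
    _ = 2 ^ Fintype.card ι * (f false + f true) := by simp [hpair, mul_add]

theorem ContinuousLinearMap.abs_apply_le_sum_mul_abs {ι : Type*} [Fintype ι] [DecidableEq ι]
    (f : (ι → ℝ) →L[ℝ] ℝ) {L : ι → ℝ} (hL : ∀ i, |f (Pi.single i 1)| ≤ L i) (v : ι → ℝ) :
    |f v| ≤ ∑ i, L i * |v i| := by
  have hsingle : ∀ i, Pi.single i (v i) = v i • (Pi.single i 1 : ι → ℝ) := fun i => by
    rw [← Pi.single_smul', smul_eq_mul, mul_one]
  calc |f v| = |∑ i, v i * f (Pi.single i 1)| := by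
        conv_lhs => rw [← Finset.univ_sum_single v]
        simp only [map_sum, hsingle, map_smul, smul_eq_mul]
    _ ≤ ∑ i, |v i| * |f (Pi.single i 1)| := by
        simpa only [abs_mul] using abs_sum_le_sum_abs (fun i => v i * f (Pi.single i 1)) univ
    _ ≤ ∑ i, L i * |v i| := by
        refine sum_le_sum fun i _ => ?_
        rw [mul_comm]
        exact mul_le_mul_of_nonneg_right (hL i) (abs_nonneg _)

theorem Convex.abs_sub_le_sum_mul_abs_of_abs_fderiv_single_le {ι : Type*} [Fintype ι]
    [DecidableEq ι] {φ : (ι → ℝ) → ℝ} {s : Set (ι → ℝ)} (hs : Convex ℝ s)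
    (hφ : ∀ x ∈ s, DifferentiableAt ℝ φ x) {L : ι → ℝ}
    (hL : ∀ x ∈ s, ∀ i, |fderiv ℝ φ x (Pi.single i 1)| ≤ L i) {x y : ι → ℝ}
    (hx : x ∈ s) (hy : y ∈ s) :
    |φ y - φ x| ≤ ∑ i, L i * |y i - x i| := by
  obtain ⟨w, hw, hmvt⟩ :=
    domain_mvt (fun x hx => (hφ x hx).hasFDerivAt.hasFDerivWithinAt) hs hx hy
  rw [hmvt]
  exact (fderiv ℝ φ w).abs_apply_le_sum_mul_abs (hL w (hs.segment_subset hx hy hw)) (y - x)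

def boxCorner {ι : Type*} (a b : ι → ℝ) (c : ι → Bool) : ι → ℝ :=
  fun i => if c i then b i else a i

theorem boxCorner_mem_Icc {ι : Type*} {a b : ι → ℝ} (hab : a ≤ b) (c : ι → Bool) :
    boxCorner a b c ∈ Set.Icc a b := by
  constructor <;> intro i <;> by_cases hc : c i <;> simp [boxCorner, hc, hab i]

theorem two_mul_sum_abs_sub_boxCorner {ι : Type*} [Fintype ι] [DecidableEq ι]
    {a b z : ι → ℝ} (hz : z ∈ Set.Icc a b) (i : ι) :
    2 * ∑ c : ι → Bool, |z i - boxCorner a b c i| = 2 ^ Fintype.card ι * (b i - a i) := by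
  have := Fintype.two_mul_sum_comp_eval i fun s => |z i - if s then b i else a i|
  simp only [Bool.false_eq_true, if_false, if_true] at this
  simp only [boxCorner, this]
  rw [abs_of_nonneg (sub_nonneg.2 (hz.1 i)), abs_of_nonpos (sub_nonpos.2 (hz.2 i))]
  ring

theorem two_mul_two_pow_mul_le_sum_boxCorner_add {ι : Type*} [Fintype ι] [DecidableEq ι]
    {φ : (ι → ℝ) → ℝ} {a b : ι → ℝ} (hφ : ∀ x ∈ Set.Icc a b, DifferentiableAt ℝ φ x)
    {L : ι → ℝ} (hL : ∀ x ∈ Set.Icc a b, ∀ i, |fderiv ℝ φ x (Pi.single i 1)| ≤ L i)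
    {z : ι → ℝ} (hz : z ∈ Set.Icc a b) :
    2 * 2 ^ Fintype.card ι * φ z ≤
      2 * ∑ c : ι → Bool, φ (boxCorner a b c) + 2 ^ Fintype.card ι * ∑ i, L i * (b i - a i) := by
  have hcorner : ∀ c, φ z ≤ φ (boxCorner a b c) + ∑ i, L i * |z i - boxCorner a b c i| := by
    intro c
    have := (convex_Icc a b).abs_sub_le_sum_mul_abs_of_abs_fderiv_single_le hφ hL
      (boxCorner_mem_Icc (hz.1.trans hz.2) c) hz
    linarith [le_abs_self (φ z - φ (boxCorner a b c))]
  have hsum := sum_le_sum fun c (_ : c ∈ univ) => hcorner c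
  rw [sum_const, card_univ, Fintype.card_fun, Fintype.card_bool, nsmul_eq_mul,
    sum_add_distrib, sum_comm] at hsum
  have hgap : 2 * ∑ i, ∑ c : ι → Bool, L i * |z i - boxCorner a b c i| =
      2 ^ Fintype.card ι * ∑ i, L i * (b i - a i) := by
    rw [mul_sum, mul_sum]
    refine sum_congr rfl fun i _ => ?_
    rw [← mul_sum, mul_left_comm, two_mul_sum_abs_sub_boxCorner hz i]
    ring
  push_cast at hsum
  linarith

theorem stmt_1_general {ℓ : ℕ} (φ : (Fin ℓ → ℝ) → ℝ)
    (hφ : ContDiff ℝ 1 φ)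
    (a b : Fin ℓ → ℝ)
    (L : Fin ℓ → ℝ)
    (hL : ∀ z ∈ Set.univ.pi (fun i => Set.Icc (a i) (b i)), ∀ i,
      |fderiv ℝ φ z (Pi.single i 1 : Fin ℓ → ℝ)| ≤ L i)
    (γstar τ : ℝ)
    (corner : (Fin ℓ → Bool) → (Fin ℓ → ℝ))
    (hcorner : ∀ c i, corner c i = if c i then b i else a i)
    (hcond : ∑ j, L j * (b j - a j)
      < 2 * γstar + 2 * τ - (2 / 2 ^ ℓ) * ∑ c : Fin ℓ → Bool, φ (corner c)) :
    ∀ z ∈ Set.univ.pi (fun i => Set.Icc (a i) (b i)), φ z < γstar + τ := by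
  intro z hz
  rw [Set.pi_univ_Icc] at hz hL
  obtain rfl : corner = boxCorner a b := funext fun c => funext (hcorner c)
  have havg := two_mul_two_pow_mul_le_sum_boxCorner_add
    (fun x _ => hφ.differentiable one_ne_zero x) hL hz
  rw [Fintype.card_fin] at havg
  have hpow : (0 : ℝ) < 2 ^ ℓ := by positivity
  have hcond' := mul_lt_mul_of_pos_left hcond hpow
  rw [mul_sub, ← mul_assoc (2 ^ ℓ : ℝ), mul_div_cancel₀ _ hpow.ne'] at hcond'
  have hscaled : 2 * 2 ^ ℓ * φ z < 2 * 2 ^ ℓ * (γstar + τ) := by linarith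
  exact lt_of_mul_lt_mul_left hscaled (by positivity)

/-- Lemma (Guarantees inside the cells): for a `C¹` function `φ : ℝ^ℓ → [0,∞)`
on a hyperrectangle `H = ∏ᵢ [aᵢ, bᵢ]` with corners `z_c` (indexed by
`c : Fin ℓ → Bool`), if `Lᵢ` bounds `|(∇φ)ᵢ|` on `H` and
`∑ⱼ Lⱼ (bⱼ − aⱼ) < 2γ* + 2τ − (2/2^ℓ) ∑_c φ(z_c)` with `γ* ≥ max_c φ(z_c)`,
then `φ(z) < γ* + τ` for all `z ∈ H`. -/
theorem stmt_1 {ℓ : ℕ} (φ : (Fin ℓ → ℝ) → ℝ)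
    (hφ : ContDiff ℝ 1 φ) (hφ0 : ∀ z, 0 ≤ φ z)
    (a b : Fin ℓ → ℝ) (hab : ∀ i, a i < b i)
    (L : Fin ℓ → ℝ)
    (hL : ∀ z ∈ Set.univ.pi (fun i => Set.Icc (a i) (b i)), ∀ i,
      |fderiv ℝ φ z (Pi.single i 1 : Fin ℓ → ℝ)| ≤ L i)
    (γstar τ : ℝ) (hτ : 0 < τ)
    (corner : (Fin ℓ → Bool) → (Fin ℓ → ℝ))
    (hcorner : ∀ c i, corner c i = if c i then b i else a i)
    (hγ : ∀ c, φ (corner c) ≤ γstar)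
    (hcond : ∑ j, L j * (b j - a j)
      < 2 * γstar + 2 * τ - (2 / 2 ^ ℓ) * ∑ c : Fin ℓ → Bool, φ (corner c)) :
    ∀ z ∈ Set.univ.pi (fun i => Set.Icc (a i) (b i)), φ z < γstar + τ :=
  stmt_1_general φ hφ a b L hL γstar τ corner hcorner hcond
end

section
/- If J, R, Q ∈ ℝ^{n×n} with J skew-symmetric, R symmetric positive definite, and Q symmetric positive definite, then every eigenvalue λ of M = (J − R)Q satisfies Re(λ) < 0, i.e., M is asymptotically stable. -/
/-!
If `(J - R) Q v = λ v` with `v ≠ 0`, put `w = Q v`. Since `Q` is Hermitian,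
`w* (J - R) w = v* Q (J - R) Q v = λ (v* Q v)`, and `v* Q v > 0`. On the left,
`Re (w* J w) = 0` because `J` is skew-Hermitian, while `w* R w > 0` because `w ≠ 0`;
hence `Re λ · (v* Q v) < 0`. A real positive definite matrix stays positive definite over `ℂ`,
since `x* A x = aᵀ A a + bᵀ A b` for `x = a + i b`.
-/

open Matrix
open scoped ComplexOrder

namespace Matrix

variable {n : Type*} [Fintype n]

section RealToComplex

variable (A : Matrix n n ℝ) (x : n → ℂ)

theorem re_star_dotProduct_map_ofReal_mulVec :
    (star x ⬝ᵥ A.map Complex.ofReal *ᵥ x).re =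
      (fun i ↦ (x i).re) ⬝ᵥ A *ᵥ (fun i ↦ (x i).re) +
        (fun i ↦ (x i).im) ⬝ᵥ A *ᵥ (fun i ↦ (x i).im) := by
  simp only [dotProduct, mulVec, Pi.star_apply, map_apply, Finset.mul_sum, Complex.re_sum,
    ← Finset.sum_add_distrib]
  refine Finset.sum_congr rfl fun i _ ↦ Finset.sum_congr rfl fun j _ ↦ ?_
  simp only [Complex.mul_re, Complex.mul_im, Complex.ofReal_re, Complex.ofReal_im,
    Complex.star_def, Complex.conj_re, Complex.conj_im]
  ring

theorem im_star_dotProduct_map_ofReal_mulVec :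
    (star x ⬝ᵥ A.map Complex.ofReal *ᵥ x).im =
      (fun i ↦ (x i).re) ⬝ᵥ A *ᵥ (fun i ↦ (x i).im) -
        (fun i ↦ (x i).im) ⬝ᵥ A *ᵥ (fun i ↦ (x i).re) := by
  simp only [dotProduct, mulVec, Pi.star_apply, map_apply, Finset.mul_sum, Complex.im_sum,
    ← Finset.sum_sub_distrib]
  refine Finset.sum_congr rfl fun i _ ↦ Finset.sum_congr rfl fun j _ ↦ ?_
  simp only [Complex.mul_re, Complex.mul_im, Complex.ofReal_re, Complex.ofReal_im,
    Complex.star_def, Complex.conj_re, Complex.conj_im]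
  ring

end RealToComplex

theorem PosDef.map_ofReal {A : Matrix n n ℝ} (hA : A.PosDef) :
    (A.map Complex.ofReal).PosDef := by
  refine .of_dotProduct_mulVec_pos (hA.isHermitian.map _ fun _ ↦ by simp)
    fun x hx ↦ Complex.pos_iff.mpr ⟨?_, ?_⟩
  · have hre_or_im : (fun i ↦ (x i).re) ≠ 0 ∨ (fun i ↦ (x i).im) ≠ 0 := by
      contrapose! hx
      exact funext fun i ↦ Complex.ext (congrFun hx.1 i) (congrFun hx.2 i)
    have hpos := fun y ↦ by simpa using hA.dotProduct_mulVec_pos (x := y)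
    have hnonneg := fun y ↦ by simpa using hA.posSemidef.dotProduct_mulVec_nonneg y
    rw [re_star_dotProduct_map_ofReal_mulVec]
    rcases hre_or_im with h | h
    · exact add_pos_of_pos_of_nonneg (hpos _ h) (hnonneg _)
    · exact add_pos_of_nonneg_of_pos (hnonneg _) (hpos _ h)
  · have hsymm : Aᵀ = A := by simpa using hA.isHermitian.eq
    rw [im_star_dotProduct_map_ofReal_mulVec, dotProduct_mulVec, ← mulVec_transpose, hsymm,
      dotProduct_comm, sub_self]

section RCLike

variable {𝕜 : Type*} [RCLike 𝕜]

theorem re_star_dotProduct_mulVec_eq_zero_of_conjTranspose_eq_neg {J : Matrix n n 𝕜}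
    (hJ : Jᴴ = -J) (x : n → 𝕜) : RCLike.re (star x ⬝ᵥ J *ᵥ x) = 0 := by
  have hstar : star (star x ⬝ᵥ J *ᵥ x) = -(star x ⬝ᵥ J *ᵥ x) := by
    rw [← star_dotProduct, star_mulVec, ← dotProduct_mulVec, hJ, neg_mulVec, dotProduct_neg]
  have hre := congrArg RCLike.re hstar
  rw [RCLike.star_def, RCLike.conj_re, map_neg] at hre
  linarith

theorem re_lt_zero_of_skew_sub_posDef_mul_posDef_mulVec_eq_smul {J R Q : Matrix n n 𝕜}
    (hJ : Jᴴ = -J) (hR : R.PosDef) (hQ : Q.PosDef) {μ : 𝕜} {v : n → 𝕜} (hv : v ≠ 0)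
    (hμ : ((J - R) * Q) *ᵥ v = μ • v) : RCLike.re μ < 0 := by
  obtain ⟨hq_re, hq_im⟩ := RCLike.pos_iff.mp (hQ.dotProduct_mulVec_pos hv)
  have hw : Q *ᵥ v ≠ 0 := fun h ↦ by simp [h] at hq_re
  have hquad : star (Q *ᵥ v) ⬝ᵥ (J - R) *ᵥ Q *ᵥ v = μ * (star v ⬝ᵥ Q *ᵥ v) := by
    rw [star_mulVec, hQ.isHermitian.eq, ← dotProduct_mulVec, mulVec_mulVec v, hμ,
      mulVec_smul, dotProduct_smul, smul_eq_mul]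
  have hneg : RCLike.re (star (Q *ᵥ v) ⬝ᵥ (J - R) *ᵥ Q *ᵥ v) < 0 := by
    rw [sub_mulVec, dotProduct_sub, map_sub,
      re_star_dotProduct_mulVec_eq_zero_of_conjTranspose_eq_neg hJ, zero_sub, neg_neg_iff_pos]
    exact (RCLike.pos_iff.mp (hR.dotProduct_mulVec_pos hw)).1
  rw [hquad, RCLike.mul_re, hq_im, mul_zero, sub_zero] at hneg
  exact neg_of_mul_neg_left hneg hq_re.le

end RCLike

end Matrix

/-- If `J` is skew-symmetric and `R`, `Q` are symmetric positive definite,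
then every eigenvalue of `M = (J − R)Q` has strictly negative real part,
i.e. `M` is asymptotically stable. -/
theorem stmt_3 {n : ℕ} (J R Q : Matrix (Fin n) (Fin n) ℝ)
    (hJ : Jᵀ = -J) (hR : R.PosDef) (hQ : Q.PosDef)
    (M : Matrix (Fin n) (Fin n) ℝ) (hM : M = (J - R) * Q)
    (lam : ℂ) (v : Fin n → ℂ) (hv : v ≠ 0)
    (heig : (M.map Complex.ofReal) *ᵥ v = lam • v) :
    lam.re < 0 := by
  have hJc : (J.map Complex.ofReal)ᴴ = -J.map Complex.ofReal := by
    rw [← conjTranspose_map _ fun _ ↦ by simp, conjTranspose_eq_transpose_of_trivial, hJ,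
      Matrix.map_neg _ Complex.ofReal_neg]
  have hMc : M.map Complex.ofReal =
      (J.map Complex.ofReal - R.map Complex.ofReal) * Q.map Complex.ofReal := by
    rw [hM, ← Matrix.map_sub _ Complex.ofReal_sub]
    exact Matrix.map_mul (f := Complex.ofRealHom)
  rw [hMc] at heig
  exact re_lt_zero_of_skew_sub_posDef_mul_posDef_mulVec_eq_smul hJc hR.map_ofReal hQ.map_ofReal
    hv heig
end

section
/- Let M = (J − R)Q with J skew-symmetric, R symmetric positive semi-definite, Q symmetric positive definite, all in ℝ^{n×n}, and suppose λ = iω is a purely imaginary eigenvalue of M with eigenvector v ∈ ℂⁿ \ {0}. Then R·Q·v = 0; in particular, if R is positive definite then M has no purely imaginary eigenvalues. -/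
/-!
Put `w = Q v`. Then `(J - R) w = iω v`, so `w* (J - R) w = iω · v* Q v`, which is purely
imaginary because `Q` is Hermitian. Since `J` is skew-Hermitian, `w* J w` is purely imaginary
too, hence the real number `w* R w` vanishes, and positive semidefiniteness of `R` turns
`w* R w = 0` into `R w = 0`. If moreover `R` is positive definite, `R Q` is invertible and
`R Q v = 0` forces `v = 0`.
-/

open Matrix
open scoped ComplexOrder

namespace Matrix

section RCLike

variable {ι 𝕜 : Type*} [Fintype ι] [RCLike 𝕜]

lemma star_star_dotProduct_mulVec (A : Matrix ι ι 𝕜) (w : ι → 𝕜) :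
    star (star w ⬝ᵥ A *ᵥ w) = star w ⬝ᵥ Aᴴ *ᵥ w := by
  rw [star_dotProduct, star_star, star_mulVec, dotProduct_comm, dotProduct_mulVec]
  exact dotProduct_comm _ _

lemma re_star_dotProduct_mulVec_self_eq_zero {A : Matrix ι ι 𝕜} (hA : Aᴴ = -A) (w : ι → 𝕜) :
    RCLike.re (star w ⬝ᵥ A *ᵥ w) = 0 := by
  have hstar : star (star w ⬝ᵥ A *ᵥ w) = -(star w ⬝ᵥ A *ᵥ w) := by
    rw [star_star_dotProduct_mulVec, hA, neg_mulVec, dotProduct_neg]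
  have := congrArg RCLike.re hstar
  rw [RCLike.star_def, RCLike.conj_re, map_neg] at this
  linarith

theorem mulVec_mulVec_eq_zero_of_re_eigenvalue_eq_zero {J R Q : Matrix ι ι 𝕜}
    (hJ : Jᴴ = -J) (hR : R.PosSemidef) (hQ : Q.IsHermitian) {μ : 𝕜} (hμ : RCLike.re μ = 0)
    {v : ι → 𝕜} (hv : ((J - R) * Q) *ᵥ v = μ • v) : R *ᵥ (Q *ᵥ v) = 0 := by
  set w := Q *ᵥ v
  have hw : (J - R) *ᵥ w = μ • v := by rw [mulVec_mulVec, hv]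
  have hwv : star w ⬝ᵥ v = star v ⬝ᵥ Q *ᵥ v := by
    rw [star_mulVec, ← star_eq_conjTranspose, star_eq_conjTranspose, hQ.eq, ← dotProduct_mulVec]
  have hre : RCLike.re (star w ⬝ᵥ (J - R) *ᵥ w) = 0 := by
    rw [hw, dotProduct_smul, hwv, smul_eq_mul, RCLike.mul_re, hμ,
      hQ.im_star_dotProduct_mulVec_self, zero_mul, mul_zero, sub_zero]
  have hRw : RCLike.re (star w ⬝ᵥ R *ᵥ w) = 0 := by
    rw [sub_mulVec, dotProduct_sub, map_sub, re_star_dotProduct_mulVec_self_eq_zero hJ] at hre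
    linarith
  have hRw_im : RCLike.im (star w ⬝ᵥ R *ᵥ w) = 0 :=
    (RCLike.nonneg_iff.mp (hR.dotProduct_mulVec_nonneg w)).2
  rw [← hR.dotProduct_mulVec_zero_iff]
  exact RCLike.ext (by rwa [map_zero]) (by rwa [map_zero])

end RCLike

section OfReal

variable {l m n : Type*}

lemma conjTranspose_map_ofReal (A : Matrix m n ℝ) :
    (A.map Complex.ofReal)ᴴ = Aᵀ.map Complex.ofReal := by
  rw [← conjTranspose_map _ fun x ↦ (Complex.conj_ofReal x).symm,
    conjTranspose_eq_transpose_of_trivial]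

lemma map_ofReal_mul [Fintype m] (A : Matrix l m ℝ) (B : Matrix m n ℝ) :
    (A * B).map Complex.ofReal = A.map Complex.ofReal * B.map Complex.ofReal :=
  Matrix.map_mul (f := Complex.ofRealHom)

lemma PosSemidef.map_ofReal [Fintype n] {R : Matrix n n ℝ} (hR : R.PosSemidef) :
    (R.map Complex.ofReal).PosSemidef := by
  classical
  obtain ⟨B, rfl⟩ : ∃ B : Matrix n n ℝ, R = star B * B := by
    open scoped MatrixOrder in exact CStarAlgebra.nonneg_iff_eq_star_mul_self.mp hR.nonneg
  rw [map_ofReal_mul, star_eq_conjTranspose, conjTranspose_eq_transpose_of_trivial,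
    ← conjTranspose_map_ofReal]
  exact posSemidef_conjTranspose_mul_self _

end OfReal

end Matrix

/-- For a Dissipative-Hamiltonian matrix `M = (J − R)Q` (`J` skew-symmetric,
`R` symmetric PSD, `Q` symmetric positive definite): any eigenvector `v ≠ 0`
of `M` for a purely imaginary eigenvalue `iω` satisfies `R·Q·v = 0`; in
particular, if `R` is positive definite then `M` has no purely imaginary
eigenvalues. -/
theorem stmt_17 {n : ℕ} (J R Q : Matrix (Fin n) (Fin n) ℝ)
    (hJ : Jᵀ = -J) (hR : R.PosSemidef) (hQ : Q.PosDef)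
    (M : Matrix (Fin n) (Fin n) ℝ) (hM : M = (J - R) * Q) :
    (∀ (ω : ℝ) (v : Fin n → ℂ), v ≠ 0 →
      (M.map Complex.ofReal) *ᵥ v = ((ω : ℂ) * Complex.I) • v →
      ((R * Q).map Complex.ofReal) *ᵥ v = 0) ∧
    (R.PosDef → ∀ (ω : ℝ) (v : Fin n → ℂ), v ≠ 0 →
      (M.map Complex.ofReal) *ᵥ v ≠ ((ω : ℂ) * Complex.I) • v) := by
  have hJc : (J.map Complex.ofReal)ᴴ = -J.map Complex.ofReal := by
    rw [conjTranspose_map_ofReal, hJ, Matrix.map_neg _ Complex.ofReal_neg]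
  have hQc : (Q.map Complex.ofReal).IsHermitian :=
    hQ.isHermitian.map _ fun x ↦ (Complex.conj_ofReal x).symm
  have kernel : ∀ (ω : ℝ) (v : Fin n → ℂ),
      (M.map Complex.ofReal) *ᵥ v = ((ω : ℂ) * Complex.I) • v →
      ((R * Q).map Complex.ofReal) *ᵥ v = 0 := by
    intro ω v hv
    rw [hM, map_ofReal_mul, Matrix.map_sub _ Complex.ofReal_sub] at hv
    rw [map_ofReal_mul, ← mulVec_mulVec]
    exact mulVec_mulVec_eq_zero_of_re_eigenvalue_eq_zero hJc hR.map_ofReal hQc (by simp) hv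
  refine ⟨fun ω v _ ↦ kernel ω v, fun hRpd ω v hv0 hv ↦ hv0 ?_⟩
  have hunit : IsUnit ((R * Q).map Complex.ofReal) :=
    (hRpd.isUnit.mul hQ.isUnit).map Complex.ofRealHom.mapMatrix
  exact mulVec_injective_iff_isUnit.mpr hunit <| (kernel ω v hv).trans (mulVec_zero _).symm
end
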